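/- For every realization of the random signs and the random permutation, if the SPS confidence region Θ̂ₙ is non-empty, then the least-squares estimate θ̂ₙ belongs to Θ̂ₙ. -/

import Mathlib

open Matrix

noncomputable section

/-- Squared Euclidean norm of a vector in `ℝ^d`. -/
def spsNormSq {d : ℕ} (v : Fin d → ℝ) : ℝ := ∑ j, v j ^ 2

/-- The strict total order `≻_π`. -/
def SuccPi {m : ℕ} (σ : Equiv.Perm (Fin m)) (z : Fin m → ℝ) (k j : Fin m) : Prop :=
  z j < z k ∨ (z k = z j ∧ σ j < σ k)

/-- The (sign-perturbed) sums `S_i(θ)`. -/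
def spsS {d n m : ℕ} (φ : Fin n → Fin d → ℝ) (Rhalf : Matrix (Fin d) (Fin d) ℝ)
    (Y : Fin n → ℝ) (a : Fin m → Fin n → ℝ) (i : Fin m) (θ : Fin d → ℝ) : Fin d → ℝ :=
  Rhalf⁻¹ *ᵥ ((n : ℝ)⁻¹ • ∑ t, (a i t * (Y t - φ t ⬝ᵥ θ)) • φ t)

/-- The rank `𝓡(θ)`. -/
def spsRank {d n m : ℕ} [NeZero m] (φ : Fin n → Fin d → ℝ)
    (Rhalf : Matrix (Fin d) (Fin d) ℝ) (Y : Fin n → ℝ) (a : Fin m → Fin n → ℝ)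
    (σ : Equiv.Perm (Fin m)) (θ : Fin d → ℝ) : ℕ :=
  1 + Set.ncard {i : Fin m | i ≠ 0 ∧
      SuccPi σ (fun j => spsNormSq (spsS φ Rhalf Y a j θ)) 0 i}

/-- The SPS confidence region `Θ̂ₙ`. -/
def spsRegion {d n m : ℕ} [NeZero m] (φ : Fin n → Fin d → ℝ)
    (Rhalf : Matrix (Fin d) (Fin d) ℝ) (Y : Fin n → ℝ) (a : Fin m → Fin n → ℝ)
    (σ : Equiv.Perm (Fin m)) (q : ℕ) : Set (Fin d → ℝ) :=
  {θ | spsRank φ Rhalf Y a σ θ ≤ m - q}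

/-!
At the least-squares estimate the unperturbed sum vanishes, `S₀(θ̂) = 0`, so `‖S₀(θ̂)‖² ≻_π ‖Sᵢ(θ̂)‖²`
forces `Sᵢ(θ̂) = 0` and `π(i) < π(0)`. Then, for every `θ`, `Sᵢ(θ) = R⁻¹ Qᵢ (θ̂ - θ)` and
`S₀(θ) = Rᵀ (θ̂ - θ)` with `Qᵢ = n⁻¹ Σₜ αᵢₜ φₜ φₜᵀ`. Since the signs are `±1`, `-Rₙ ≤ Qᵢ ≤ Rₙ` in the
Loewner order, and this gives `‖Sᵢ(θ)‖ ≤ ‖S₀(θ)‖`; so `S₀(θ)` still beats `Sᵢ(θ)`. Hence `θ̂` has the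
smallest rank, and it lies in the region as soon as any point does.
-/

section QuadraticForm

variable {ι : Type*} [Fintype ι]

/- Polarization: with `u = Bx`, `4 (u ⬝ᵥ u) = (u+x)ᵀB(u+x) - (u-x)ᵀB(u-x) ≤ ‖u+x‖² + ‖u-x‖²`. -/
theorem dotProduct_self_mulVec_le_of_abs_le {B : Matrix ι ι ℝ} (hB : Bᵀ = B)
    (hle : ∀ x, |x ⬝ᵥ (B *ᵥ x)| ≤ x ⬝ᵥ x) (x : ι → ℝ) :
    (B *ᵥ x) ⬝ᵥ (B *ᵥ x) ≤ x ⬝ᵥ x := by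
  set u := B *ᵥ x
  have hsymm : x ⬝ᵥ (B *ᵥ u) = u ⬝ᵥ u := by
    rw [dotProduct_mulVec, ← mulVec_transpose, hB, dotProduct_comm]
  have hplus := (abs_le.1 (hle (u + x))).2
  have hminus := (abs_le.1 (hle (u - x))).1
  simp only [mulVec_add, mulVec_sub, add_dotProduct, dotProduct_add, sub_dotProduct,
    dotProduct_sub, hsymm, dotProduct_comm x u] at hplus hminus
  linarith

theorem dotProduct_self_inv_mulVec_le [DecidableEq ι] {R Q : Matrix ι ι ℝ}
    (hR : IsUnit R.det) (hQ : Qᵀ = Q)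
    (hle : ∀ y, |y ⬝ᵥ (Q *ᵥ y)| ≤ y ⬝ᵥ ((R * Rᵀ) *ᵥ y)) (δ : ι → ℝ) :
    (R⁻¹ *ᵥ (Q *ᵥ δ)) ⬝ᵥ (R⁻¹ *ᵥ (Q *ᵥ δ)) ≤ (Rᵀ *ᵥ δ) ⬝ᵥ (Rᵀ *ᵥ δ) := by
  have hRT : IsUnit Rᵀ.det := by rwa [det_transpose]
  have hcancel : ∀ x, Rᵀ *ᵥ (Rᵀ⁻¹ *ᵥ x) = x := fun x => by
    rw [mulVec_mulVec, mul_nonsing_inv _ hRT, one_mulVec]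
  -- the congruence by `Rᵀ⁻¹` reduces the claim to the case `R = 1`
  set B := R⁻¹ * Q * Rᵀ⁻¹
  have hB : Bᵀ = B := by
    simp only [B, transpose_mul, hQ, transpose_nonsing_inv, transpose_transpose, mul_assoc]
  have hquad : ∀ x, x ⬝ᵥ (B *ᵥ x) = (Rᵀ⁻¹ *ᵥ x) ⬝ᵥ (Q *ᵥ (Rᵀ⁻¹ *ᵥ x)) := fun x => by
    rw [← mulVec_mulVec, ← mulVec_mulVec, dotProduct_mulVec, ← mulVec_transpose,
      transpose_nonsing_inv]
  have hnorm : ∀ x, (Rᵀ⁻¹ *ᵥ x) ⬝ᵥ ((R * Rᵀ) *ᵥ (Rᵀ⁻¹ *ᵥ x)) = x ⬝ᵥ x := fun x => by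
    rw [← mulVec_mulVec, hcancel, dotProduct_mulVec, ← mulVec_transpose, hcancel]
  have hBR : B *ᵥ (Rᵀ *ᵥ δ) = R⁻¹ *ᵥ (Q *ᵥ δ) := by
    rw [mulVec_mulVec, mul_assoc, nonsing_inv_mul _ hRT, mul_one, mulVec_mulVec]
  rw [← hBR]
  exact dotProduct_self_mulVec_le_of_abs_le hB (fun x => hquad x ▸ hnorm x ▸ hle _) _

end QuadraticForm

section SignedSums

variable {ι κ : Type*} [Fintype ι] (φ : ι → κ → ℝ)

def signedGram (c : ι → ℝ) : Matrix κ κ ℝ :=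
  ∑ t, c t • vecMulVec (φ t) (φ t)

def signedScore [Fintype κ] (Y c : ι → ℝ) (θ : κ → ℝ) : κ → ℝ :=
  ∑ t, (c t * (Y t - φ t ⬝ᵥ θ)) • φ t

theorem signedGram_one : signedGram φ 1 = ∑ t, vecMulVec (φ t) (φ t) := by
  simp [signedGram]

theorem signedGram_transpose (c : ι → ℝ) : (signedGram φ c)ᵀ = signedGram φ c := by
  simp only [signedGram, transpose_sum, transpose_smul, transpose_vecMulVec]

theorem dotProduct_signedGram_mulVec [Fintype κ] (c : ι → ℝ) (y : κ → ℝ) :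
    y ⬝ᵥ (signedGram φ c *ᵥ y) = ∑ t, c t * (φ t ⬝ᵥ y) ^ 2 := by
  simp only [signedGram, sum_mulVec, smul_mulVec, vecMulVec_mulVec, op_smul_eq_smul,
    dotProduct_sum, dotProduct_smul, smul_eq_mul]
  exact Finset.sum_congr rfl fun t _ => by rw [dotProduct_comm y]; ring

theorem abs_dotProduct_signedGram_mulVec_le [Fintype κ] {c : ι → ℝ} (hc : ∀ t, |c t| ≤ 1)
    (y : κ → ℝ) :
    |y ⬝ᵥ (signedGram φ c *ᵥ y)| ≤ y ⬝ᵥ (signedGram φ 1 *ᵥ y) := by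
  rw [dotProduct_signedGram_mulVec, dotProduct_signedGram_mulVec]
  refine (Finset.abs_sum_le_sum_abs _ _).trans (Finset.sum_le_sum fun t _ => ?_)
  rw [abs_mul, abs_of_nonneg (sq_nonneg (φ t ⬝ᵥ y)), Pi.one_apply, one_mul]
  exact mul_le_of_le_one_left (sq_nonneg _) (hc t)

theorem signedScore_eq_add_signedGram_mulVec [Fintype κ] (Y c : ι → ℝ) (θ θ' : κ → ℝ) :
    signedScore φ Y c θ = signedScore φ Y c θ' + signedGram φ c *ᵥ (θ' - θ) := by
  simp only [signedScore, signedGram, sum_mulVec, smul_mulVec, vecMulVec_mulVec, op_smul_eq_smul,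
    ← Finset.sum_add_distrib, smul_smul, ← add_smul, dotProduct_sub]
  exact Finset.sum_congr rfl fun t _ => by ring_nf

theorem signedScore_one_lse_eq_zero [Fintype κ] [DecidableEq κ] (Y : ι → ℝ)
    (hG : IsUnit (signedGram φ 1).det) :
    signedScore φ Y 1 ((signedGram φ 1)⁻¹ *ᵥ ∑ t, Y t • φ t) = 0 := by
  rw [signedScore_eq_add_signedGram_mulVec φ Y 1 _ 0, zero_sub, mulVec_neg, mulVec_mulVec,
    mul_nonsing_inv _ hG, one_mulVec]
  simp [signedScore]

end SignedSums

theorem spsNormSq_eq_dotProduct {d : ℕ} (v : Fin d → ℝ) : spsNormSq v = v ⬝ᵥ v := by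
  simp [spsNormSq, dotProduct, sq]

theorem spsNormSq_nonneg {d : ℕ} (v : Fin d → ℝ) : 0 ≤ spsNormSq v :=
  Finset.sum_nonneg fun j _ => sq_nonneg (v j)

theorem spsNormSq_zero {d : ℕ} : spsNormSq (0 : Fin d → ℝ) = 0 := by
  simp [spsNormSq]

theorem spsNormSq_eq_zero_iff {d : ℕ} {v : Fin d → ℝ} : spsNormSq v = 0 ↔ v = 0 := by
  rw [spsNormSq_eq_dotProduct, dotProduct_self_eq_zero]

theorem SuccPi.of_le_of_lt {m : ℕ} {σ : Equiv.Perm (Fin m)} {z : Fin m → ℝ} {k j : Fin m}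
    (hz : z j ≤ z k) (hσ : σ j < σ k) : SuccPi σ z k j :=
  hz.lt_or_eq.imp id fun h => ⟨h.symm, hσ⟩

theorem SuccPi.eq_and_lt_of_le {m : ℕ} {σ : Equiv.Perm (Fin m)} {z : Fin m → ℝ} {k j : Fin m}
    (h : SuccPi σ z k j) (hz : z k ≤ z j) : z k = z j ∧ σ j < σ k :=
  h.resolve_left hz.not_gt

section SPS

variable {d n m : ℕ} (φ : Fin n → Fin d → ℝ) (Rhalf : Matrix (Fin d) (Fin d) ℝ) (Y : Fin n → ℝ)
  (a : Fin m → Fin n → ℝ)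

theorem spsS_eq_signedScore (i : Fin m) (θ : Fin d → ℝ) :
    spsS φ Rhalf Y a i θ = Rhalf⁻¹ *ᵥ ((n : ℝ)⁻¹ • signedScore φ Y (a i) θ) :=
  rfl

variable {φ Rhalf Y a}

theorem spsS_eq_of_spsS_eq_zero (hR : IsUnit Rhalf.det) {i : Fin m} {θ' : Fin d → ℝ}
    (hi : spsS φ Rhalf Y a i θ' = 0) (θ : Fin d → ℝ) :
    spsS φ Rhalf Y a i θ = Rhalf⁻¹ *ᵥ (((n : ℝ)⁻¹ • signedGram φ (a i)) *ᵥ (θ' - θ)) := by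
  have hscore : (n : ℝ)⁻¹ • signedScore φ Y (a i) θ' = 0 := by
    rw [← one_mulVec ((n : ℝ)⁻¹ • _), ← mul_nonsing_inv _ hR, ← mulVec_mulVec,
      ← spsS_eq_signedScore, hi, mulVec_zero]
  rw [spsS_eq_signedScore, signedScore_eq_add_signedGram_mulVec φ Y (a i) θ θ', smul_add,
    hscore, zero_add, smul_mulVec]

theorem spsS_eq_transpose_mulVec_of_signs_eq_one (hR : IsUnit Rhalf.det)
    (hfact : Rhalf * Rhalfᵀ = (n : ℝ)⁻¹ • signedGram φ 1) {k : Fin m} (hk : ∀ t, a k t = 1)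
    {θ' : Fin d → ℝ} (hlse : signedScore φ Y 1 θ' = 0) (θ : Fin d → ℝ) :
    spsS φ Rhalf Y a k θ = Rhalfᵀ *ᵥ (θ' - θ) := by
  have hk' : a k = 1 := funext hk
  have hSk : spsS φ Rhalf Y a k θ' = 0 := by
    rw [spsS_eq_signedScore, hk', hlse, smul_zero, mulVec_zero]
  rw [spsS_eq_of_spsS_eq_zero hR hSk, hk', ← hfact, mulVec_mulVec, ← mul_assoc,
    nonsing_inv_mul _ hR, one_mul]

theorem spsNormSq_spsS_le_of_spsS_eq_zero (hR : IsUnit Rhalf.det)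
    (hfact : Rhalf * Rhalfᵀ = (n : ℝ)⁻¹ • signedGram φ 1) {k : Fin m} (hk : ∀ t, a k t = 1)
    {θ' : Fin d → ℝ} (hlse : signedScore φ Y 1 θ' = 0) {i : Fin m} (hsign : ∀ t, |a i t| ≤ 1)
    (hi : spsS φ Rhalf Y a i θ' = 0) (θ : Fin d → ℝ) :
    spsNormSq (spsS φ Rhalf Y a i θ) ≤ spsNormSq (spsS φ Rhalf Y a k θ) := by
  rw [spsNormSq_eq_dotProduct, spsNormSq_eq_dotProduct, spsS_eq_of_spsS_eq_zero hR hi,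
    spsS_eq_transpose_mulVec_of_signs_eq_one hR hfact hk hlse]
  refine dotProduct_self_inv_mulVec_le hR (by rw [transpose_smul, signedGram_transpose])
    (fun y => ?_) _
  rw [hfact, smul_mulVec, smul_mulVec, dotProduct_smul, dotProduct_smul, smul_eq_mul, smul_eq_mul,
    abs_mul, abs_of_nonneg (by positivity)]
  exact mul_le_mul_of_nonneg_left (abs_dotProduct_signedGram_mulVec_le φ hsign y) (by positivity)

theorem spsRank_le_of_signedScore_eq_zero [NeZero m] (hR : IsUnit Rhalf.det)
    (hfact : Rhalf * Rhalfᵀ = (n : ℝ)⁻¹ • signedGram φ 1) (ha0 : ∀ t, a 0 t = 1)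
    (hsign : ∀ i t, |a i t| ≤ 1) {θ' : Fin d → ℝ} (hlse : signedScore φ Y 1 θ' = 0)
    (σ : Equiv.Perm (Fin m)) (θ : Fin d → ℝ) :
    spsRank φ Rhalf Y a σ θ' ≤ spsRank φ Rhalf Y a σ θ := by
  refine Nat.add_le_add_left (Set.ncard_le_ncard ?_ (Set.toFinite _)) 1
  rintro i ⟨hi0, hbeats⟩
  have hS0 : spsS φ Rhalf Y a 0 θ' = 0 := by
    rw [spsS_eq_transpose_mulVec_of_signs_eq_one hR hfact ha0 hlse, sub_self, mulVec_zero]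
  obtain ⟨heq, hlt⟩ :=
    hbeats.eq_and_lt_of_le (by simp only [hS0, spsNormSq_zero]; exact spsNormSq_nonneg _)
  have hi : spsS φ Rhalf Y a i θ' = 0 :=
    spsNormSq_eq_zero_iff.1 (by simp only [← heq, hS0, spsNormSq_zero])
  exact ⟨hi0, SuccPi.of_le_of_lt
    (spsNormSq_spsS_le_of_spsS_eq_zero hR hfact ha0 hlse (hsign i) hi θ) hlt⟩

end SPS

theorem lse_mem_sps_region_of_nonempty_general
    (d n m q : ℕ) [NeZero m]
    (φ : Fin n → Fin d → ℝ) (Y : Fin n → ℝ)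
    (Rn : Matrix (Fin d) (Fin d) ℝ)
    (hRn : Rn = (n : ℝ)⁻¹ • ∑ t, vecMulVec (φ t) (φ t))
    (Rhalf : Matrix (Fin d) (Fin d) ℝ)
    (hRhalfInv : IsUnit Rhalf.det)
    (hfact : Rhalf * Rhalfᵀ = Rn)
    (θhat : Fin d → ℝ)
    (hθhat : θhat = (∑ t, vecMulVec (φ t) (φ t))⁻¹ *ᵥ ∑ t, Y t • φ t)
    (a : Fin m → Fin n → ℝ)
    (ha0 : ∀ t, a 0 t = 1)
    (ha : ∀ i t, a i t = 1 ∨ a i t = -1)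
    (π : Equiv.Perm (Fin m))
    (hne : (spsRegion φ Rhalf Y a π q).Nonempty) :
    θhat ∈ spsRegion φ Rhalf Y a π q := by
  obtain ⟨θ, hθ⟩ := hne
  have hfact' : Rhalf * Rhalfᵀ = (n : ℝ)⁻¹ • signedGram φ 1 := by rw [hfact, hRn, signedGram_one]
  have hG : IsUnit (signedGram φ 1).det := by
    refine isUnit_iff_ne_zero.2 fun h => (isUnit_iff_ne_zero.1 hRhalfInv) ?_
    have hdet := congrArg det hfact'
    rw [det_mul, det_transpose, det_smul, h, mul_zero] at hdet
    exact mul_self_eq_zero.1 hdet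
  have hlse : signedScore φ Y 1 θhat = 0 := by
    rw [hθhat, ← signedGram_one]
    exact signedScore_one_lse_eq_zero φ Y hG
  have hsign : ∀ i t, |a i t| ≤ 1 := fun i t => by
    rcases ha i t with h | h <;> simp [h]
  exact (spsRank_le_of_signedScore_eq_zero hRhalfInv hfact' ha0 hsign hlse π θ).trans hθ

/-- For every realization of the random signs and the random permutation, if the SPS
confidence region is non-empty then it contains the least-squares estimate. -/
theorem lse_mem_sps_region_of_nonempty
    (d n m q : ℕ) [NeZero m] (hn : 0 < n) (hq : 0 < q) (hqm : q < m)
    (φ : Fin n → Fin d → ℝ) (Y : Fin n → ℝ)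
    (Rn : Matrix (Fin d) (Fin d) ℝ)
    (hRn : Rn = (n : ℝ)⁻¹ • ∑ t, vecMulVec (φ t) (φ t))
    (hPD : Rn.PosDef)
    (Rhalf : Matrix (Fin d) (Fin d) ℝ)
    (hRhalfInv : IsUnit Rhalf.det)
    (hfact : Rhalf * Rhalfᵀ = Rn)
    (θhat : Fin d → ℝ)
    (hθhat : θhat = (∑ t, vecMulVec (φ t) (φ t))⁻¹ *ᵥ ∑ t, Y t • φ t)
    (a : Fin m → Fin n → ℝ)
    (ha0 : ∀ t, a 0 t = 1)
    (ha : ∀ i t, a i t = 1 ∨ a i t = -1)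
    (π : Equiv.Perm (Fin m))
    (hne : (spsRegion φ Rhalf Y a π q).Nonempty) :
    θhat ∈ spsRegion φ Rhalf Y a π q :=
  lse_mem_sps_region_of_nonempty_general d n m q φ Y Rn hRn Rhalf hRhalfInv hfact θhat hθhat a ha0
    ha π hne

end
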